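/- Every surjective group homomorphism from the free group on two generators to itself is an isomorphism. -/

import Mathlib

/-!
Mal'cev's argument: in a finitely generated group `G` there are only finitely many homomorphisms
to a fixed finite group `Q`, so precomposition with a surjective endomorphism `f`, being injective
on `G →* Q`, is a bijection. Every homomorphism to `Q` therefore factors through `f` and kills
`ker f`; if `G` is residually finite, this forces `ker f = 1`. Free groups are residually finite:
a reduced word of length `n` is realised as a path `n → n - 1 → ⋯ → 0` in `Fin (n + 1)`, and
reducedness is exactly what makes the partial maps prescribed by each generator injective, so
they extend to permutations under which the word moves `n` to `0`.
-/

open Function Equiv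

instance MonoidHom.finite_of_fg {G Q : Type*} [Group G] [Group.FG G] [Monoid Q] [Finite Q] :
    Finite (G →* Q) := by
  obtain ⟨S, hS⟩ := Group.FG.out (G := G)
  refine .of_injective (fun φ : G →* Q => fun s : S => φ s) fun φ ψ h => ?_
  exact MonoidHom.eq_of_eqOn_dense hS fun s hs => congrFun h ⟨s, hs⟩

theorem MonoidHom.injective_of_surjective_of_residuallyFinite {G : Type*} [Group G]
    [Group.FG G] [Group.ResiduallyFinite G] (f : G →* G) (hf : Surjective f) : Injective f := by
  refine (injective_iff_map_eq_one f).mpr fun g hfg => ?_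
  by_contra hg
  obtain ⟨H, hgH⟩ := Group.exists_finiteIndexNormalSubgroup_notMem g hg
  have precomp_injective : Injective fun φ : G →* G ⧸ H.toSubgroup => φ.comp f :=
    fun φ ψ h => MonoidHom.ext fun x => by
      obtain ⟨y, rfl⟩ := hf x
      exact DFunLike.congr_fun h y
  obtain ⟨ψ, hψ⟩ := Finite.injective_iff_surjective.mp precomp_injective (QuotientGroup.mk' _)
  have : (g : G ⧸ H.toSubgroup) = 1 := by
    rw [← QuotientGroup.mk'_apply, ← hψ, MonoidHom.comp_apply, hfg, map_one]
  exact hgH ((QuotientGroup.eq_one_iff g).mp this)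

namespace FreeGroup

variable {α : Type*}

theorem IsReduced.getElem_succ {w : List (α × Bool)} (hw : IsReduced w) {i : ℕ}
    (hi : i + 1 < w.length) (h : w[i].1 = w[i + 1].1) : w[i].2 = w[i + 1].2 :=
  List.isChain_iff_getElem.mp hw i hi h

theorem lift_mk_apply_last_of_path {β : Type*} (σ : α → Perm β) (w : List (α × Bool))
    (pt : Fin (w.length + 1) → β)
    (step : ∀ i : Fin w.length, cond w[i].2 (σ w[i].1) (σ w[i].1)⁻¹ (pt i.succ) = pt i.castSucc) :
    lift σ (mk w) (pt (Fin.last _)) = pt 0 := by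
  induction w with
  | nil => rfl
  | cons c w ih =>
    have tail := ih (pt ∘ Fin.succ) fun i => by
      have := step i.succ
      rw [← Fin.succ_castSucc] at this
      exact this
    rw [lift_mk] at tail ⊢
    rw [List.map_cons, List.prod_cons, Perm.mul_apply]
    exact (congrArg _ tail).trans (step 0)

theorem exists_perm_path_of_isReduced {w : List (α × Bool)} (hw : IsReduced w) :
    ∃ σ : α → Perm (Fin (w.length + 1)),
      ∀ i : Fin w.length, cond w[i].2 (σ w[i].1) (σ w[i].1)⁻¹ i.succ = i.castSucc := by
  let src (i : Fin w.length) : Fin (w.length + 1) := cond w[i].2 i.succ i.castSucc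
  let tgt (i : Fin w.length) : Fin (w.length + 1) := cond w[i].2 i.castSucc i.succ
  have no_cancel (i j : Fin w.length) (hij : j.val = i.val + 1) (h1 : w[i].1 = w[j].1)
      (h2 : w[i].2 ≠ w[j].2) : False := by
    obtain ⟨j, hj⟩ := j
    obtain rfl : j = i.val + 1 := hij
    exact h2 (hw.getElem_succ hj h1)
  have src_injective (i j : Fin w.length) (h1 : w[i].1 = w[j].1) (h : src i = src j) : i = j := by
    cases hi : w[i].2 <;> cases hj : w[j].2 <;>
      simp only [src, hi, hj, cond_true, cond_false, Fin.ext_iff, Fin.val_succ,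
        Fin.val_castSucc] at h
    · exact Fin.ext h
    · exact (no_cancel j i h h1.symm (by rw [hi, hj]; decide)).elim
    · exact (no_cancel i j h.symm h1 (by rw [hi, hj]; decide)).elim
    · exact Fin.ext (by omega)
  have tgt_injective (i j : Fin w.length) (h1 : w[i].1 = w[j].1) (h : tgt i = tgt j) : i = j := by
    cases hi : w[i].2 <;> cases hj : w[j].2 <;>
      simp only [tgt, hi, hj, cond_true, cond_false, Fin.ext_iff, Fin.val_succ,
        Fin.val_castSucc] at h
    · exact Fin.ext (by omega)
    · exact (no_cancel i j h.symm h1 (by rw [hi, hj]; decide)).elim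
    · exact (no_cancel j i h h1.symm (by rw [hi, hj]; decide)).elim
    · exact Fin.ext h
  choose σ hσ using fun a => Perm.exists_extending_pair
    (fun i : {i : Fin w.length // w[i].1 = a} => src i) (fun i => tgt i)
    (fun i j h => Subtype.ext (src_injective i j (i.2.trans j.2.symm) h))
    (fun i j h => Subtype.ext (tgt_injective i j (i.2.trans j.2.symm) h))
  refine ⟨σ, fun i => ?_⟩
  have hi := hσ _ ⟨i, rfl⟩
  cases hb : w[i].2 <;> simp only [src, tgt, hb, cond_true, cond_false] at hi ⊢
  · exact Perm.inv_eq_iff_eq.mpr hi.symm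
  · exact hi

instance residuallyFinite : Group.ResiduallyFinite (FreeGroup α) := by
  classical
  refine Group.residuallyFinite_of_forall_exists_finite_monoidHom fun g hg => ?_
  obtain ⟨σ, hσ⟩ := exists_perm_path_of_isReduced (isReduced_toWord (x := g))
  refine ⟨_, inferInstance, inferInstance, lift σ, fun h => hg ?_⟩
  have hpath := lift_mk_apply_last_of_path σ g.toWord id hσ
  rw [mk_toWord, h, Perm.one_apply, id, id, Fin.last_eq_zero_iff] at hpath
  exact toWord_eq_nil_iff.mp (List.length_eq_zero_iff.mp hpath)

end FreeGroup

/-- Free groups of rank 2 are Hopfian: every surjective endomorphism of the free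
group on two generators is an isomorphism (i.e. bijective). -/
theorem freeGroup_two_hopfian
    (f : FreeGroup (Fin 2) →* FreeGroup (Fin 2))
    (hf : Function.Surjective f) : Function.Bijective f :=
  ⟨f.injective_of_surjective_of_residuallyFinite hf, hf⟩
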